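/- Left multiplication by s is injective on images of words in the algebra H: for any two words Y, Z over Ψ, if the images of s·Y and s·Z in H are equal, then the images of Y and Z in H are equal. -/

import Mathlib

noncomputable section

/-- Direction of the head movement of the Turing machine. -/
inductive Dir
  | L
  | R
deriving DecidableEq

/-- The instruction table of Minsky's universal Turing machine: for a state `i` and a color `j`,
`instr i j` is `some (d, q, p)` where `d` is the direction of the head movement, `q` the new
state and `p` the new color of the current cell; it is `none` exactly for the STOP pair
`(4, 3)`. -/
def instr : Fin 7 → Fin 4 → Option (Dir × Fin 7 × Fin 4) := fun i j =>
  match i.val, j.val with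
  | 0, 0 => some (Dir.L, 4, 1)
  | 0, 1 => some (Dir.L, 1, 3)
  | 0, 2 => some (Dir.R, 0, 0)
  | 0, 3 => some (Dir.R, 0, 1)
  | 1, 0 => some (Dir.L, 1, 2)
  | 1, 1 => some (Dir.L, 1, 3)
  | 1, 2 => some (Dir.R, 0, 0)
  | 1, 3 => some (Dir.L, 1, 3)
  | 2, 0 => some (Dir.R, 2, 2)
  | 2, 1 => some (Dir.R, 2, 1)
  | 2, 2 => some (Dir.R, 2, 0)
  | 2, 3 => some (Dir.L, 4, 1)
  | 3, 0 => some (Dir.R, 3, 2)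
  | 3, 1 => some (Dir.R, 3, 1)
  | 3, 2 => some (Dir.R, 3, 0)
  | 3, 3 => some (Dir.L, 4, 0)
  | 4, 0 => some (Dir.L, 5, 2)
  | 4, 1 => some (Dir.L, 4, 1)
  | 4, 2 => some (Dir.L, 4, 0)
  | 4, 3 => none
  | 5, 0 => some (Dir.L, 5, 2)
  | 5, 1 => some (Dir.L, 5, 1)
  | 5, 2 => some (Dir.L, 6, 2)
  | 5, 3 => some (Dir.R, 2, 1)
  | 6, 0 => some (Dir.R, 0, 3)
  | 6, 1 => some (Dir.R, 6, 3)
  | 6, 2 => some (Dir.R, 6, 2)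
  | 6, 3 => some (Dir.R, 3, 1)
  | _, _ => none

/-- The alphabet `Ψ = {t, s, a_0, …, a_3, Q_0, …, Q_6, P_0, …, P_3, L, R}`. -/
inductive Psi
  | t
  | s
  | a (k : Fin 4)
  | Q (i : Fin 7)
  | P (j : Fin 4)
  | L
  | R
deriving DecidableEq, Fintype

/-- The image in the free algebra of a word over the alphabet `Ψ`. -/
def wrd (K : Type*) [Field K] (l : List Psi) : FreeAlgebra K Psi :=
  (l.map (FreeAlgebra.ι K)).prod

open Psi in
/-- The defining relations of the algebra `H`. -/
inductive HRel (K : Type*) [Field K] : FreeAlgebra K Psi → FreeAlgebra K Psi → Prop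
  | rel1 (k : Fin 4) :
      HRel K (wrd K [t, L, a k]) (wrd K [L, t, a k])
  | rel2 (k l : Fin 4) :
      HRel K (wrd K [t, a k, a l]) (wrd K [a k, t, a l])
  | rel9 :
      HRel K (wrd K [s, R]) (wrd K [R, s])
  | rel8 (k : Fin 4) :
      HRel K (wrd K [s, a k]) (wrd K [a k, s])
  | rel3 (i : Fin 7) (j : Fin 4) (q : Fin 7) (p : Fin 4) (k : Fin 4)
      (h : instr i j = some (Dir.L, q, p)) :
      HRel K (wrd K [t, a k, Q i, P j]) (wrd K [Q q, P k, a p, s])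
  | rel5 (i : Fin 7) (j : Fin 4) (q : Fin 7) (p : Fin 4)
      (h : instr i j = some (Dir.L, q, p)) :
      HRel K (wrd K [t, L, Q i, P j]) (wrd K [L, Q q, P 0, a p, s])
  | rel4 (i : Fin 7) (j : Fin 4) (q : Fin 7) (p : Fin 4) (l k : Fin 4)
      (h : instr i j = some (Dir.R, q, p)) :
      HRel K (wrd K [t, a l, Q i, P j, a k]) (wrd K [a l, a p, Q q, P k, s])
  | rel4b (i : Fin 7) (j : Fin 4) (q : Fin 7) (p : Fin 4) (k : Fin 4)
      (h : instr i j = some (Dir.R, q, p)) :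
      HRel K (wrd K [t, L, Q i, P j, a k]) (wrd K [L, a p, Q q, P k, s])
  | rel6 (i : Fin 7) (j : Fin 4) (q : Fin 7) (p : Fin 4) (l : Fin 4)
      (h : instr i j = some (Dir.R, q, p)) :
      HRel K (wrd K [t, a l, Q i, P j, R]) (wrd K [a l, a p, Q q, P 0, R, s])
  | rel6b (i : Fin 7) (j : Fin 4) (q : Fin 7) (p : Fin 4)
      (h : instr i j = some (Dir.R, q, p)) :
      HRel K (wrd K [t, L, Q i, P j, R]) (wrd K [L, a p, Q q, P 0, R, s])
  | rel7 :
      HRel K (wrd K [Q 4, P 3]) 0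

/-- The algebra `H`: the quotient of the free associative unital `K`-algebra on `Ψ` by the
two-sided ideal generated by the defining relations. -/
abbrev AlgH (K : Type*) [Field K] := RingQuot (HRel K)

/-- The image in `H` of a word over the alphabet `Ψ`. -/
def mkw (K : Type*) [Field K] (l : List Psi) : AlgH K :=
  RingQuot.mkAlgHom K (HRel K) (wrd K l)

/-- The image of the letter `t` in `H`. -/
def tEl (K : Type*) [Field K] : AlgH K := mkw K [Psi.t]

/-- The image of the letter `s` in `H`. -/
def sEl (K : Type*) [Field K] : AlgH K := mkw K [Psi.s]

/-! Let `σ = stripS` be the linear endomorphism of the free algebra that deletes the first `s` of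
a word when only letters `a_k` and `R` precede it, and kills every other word. The relations only
move `s` past `a_k` and `R`, or create an `s` behind one of `t`, `L`, `Q_i`, `P_j`, so
`σ (x * v) = σ (y * v)` for every relation `x = y`. As `σ (c * x)` is obtained from `x` and `σ x`
by left multiplications, `∀ u v, π (σ (u * x * v)) = π (σ (u * y * v))` (with `π` the projection
onto `H`) is a ring congruence containing the relations. Hence `π x = π y` implies
`π (σ x) = π (σ y)`, and `σ (s * Y) = Y`. -/

theorem RingQuot.rel_of_mkAlgHom_eq {S A : Type*} [CommSemiring S] [Semiring A] [Algebra S A]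
    {r : A → A → Prop} {c : RingCon A} (hc : r ≤ ⇑c) {x y : A}
    (h : RingQuot.mkAlgHom S r x = RingQuot.mkAlgHom S r y) : c x y := by
  simp only [RingQuot.mkAlgHom_def, RingQuot.mkRingHom_def, AlgHom.coe_mk, RingHom.coe_mk,
    MonoidHom.coe_mk, OneHom.coe_mk, RingQuot.mk.injEq] at h
  have hgen : RingConGen.Rel r x y := RingQuot.eqvGen_rel_eq r ▸ Quot.eqvGen_exact h
  exact RingCon.ringConGen_le.2 hc hgen

namespace RingCon

variable {R M : Type*} [Semiring R] [AddCommMonoid M]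

def sandwich (φ : R →+ M) : RingCon R where
  r x y := ∀ u v, φ (u * x * v) = φ (u * y * v)
  iseqv := ⟨fun _ _ _ => rfl, fun h u v => (h u v).symm, fun h₁ h₂ u v => (h₁ u v).trans (h₂ u v)⟩
  add' h₁ h₂ u v := by simp only [mul_add, add_mul, map_add, h₁ u v, h₂ u v]
  mul' {a b c d} h₁ h₂ u v :=
    calc φ (u * (a * c) * v) = φ (u * a * (c * v)) := by simp only [mul_assoc]
      _ = φ (u * b * (c * v)) := h₁ u (c * v)
      _ = φ (u * b * c * v) := by simp only [mul_assoc]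
      _ = φ (u * b * d * v) := h₂ (u * b) v
      _ = φ (u * (b * d) * v) := by simp only [mul_assoc]

theorem sandwich_apply_eq {φ : R →+ M} {x y : R} (h : sandwich φ x y) : φ x = φ y := by
  simpa using h 1 1

end RingCon

namespace AlgH

open Psi FreeAlgebra

variable (K : Type*) [Field K]

local notation "π" => RingQuot.mkAlgHom K (HRel K)

theorem wrd_cons (c : Psi) (l : List Psi) : wrd K (c :: l) = ι K c * wrd K l := by
  simp [wrd]

-- `stripRep u` sends `(x, stripS x)` to `(u * x, stripS (u * x))`.
def stripStep : Psi → Module.End K (FreeAlgebra K Psi × FreeAlgebra K Psi)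
  | s => (LinearMap.mulLeft K (ι K s) ∘ₗ LinearMap.fst K _ _).prod (LinearMap.fst K _ _)
  | a k => (LinearMap.mulLeft K (ι K (a k))).prodMap (LinearMap.mulLeft K (ι K (a k)))
  | R => (LinearMap.mulLeft K (ι K R)).prodMap (LinearMap.mulLeft K (ι K R))
  | c => (LinearMap.mulLeft K (ι K c)).prodMap 0

def stripRep : FreeAlgebra K Psi →ₐ[K] Module.End K (FreeAlgebra K Psi × FreeAlgebra K Psi) :=
  lift K (stripStep K)

theorem fst_stripRep_apply (u : FreeAlgebra K Psi) (p : FreeAlgebra K Psi × FreeAlgebra K Psi) :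
    (stripRep K u p).1 = u * p.1 := by
  induction u using FreeAlgebra.induction generalizing p with
  | grade0 r => simp [Algebra.smul_def]
  | grade1 c => rw [stripRep, lift_ι_apply]; cases c <;> rfl
  | mul u₁ u₂ ih₁ ih₂ => simp [Module.End.mul_apply, ih₁, ih₂, mul_assoc]
  | add u₁ u₂ ih₁ ih₂ => simp [ih₁, ih₂, add_mul]

def stripS : FreeAlgebra K Psi →ₗ[K] FreeAlgebra K Psi :=
  LinearMap.snd K _ _ ∘ₗ LinearMap.applyₗ (1, 0) ∘ₗ (stripRep K).toLinearMap

theorem stripRep_apply_one_zero (u : FreeAlgebra K Psi) :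
    stripRep K u (1, 0) = (u, stripS K u) :=
  Prod.ext (by simp [fst_stripRep_apply]) rfl

theorem stripS_ι_mul (c : Psi) (x : FreeAlgebra K Psi) :
    stripS K (ι K c * x) = (stripStep K c (x, stripS K x)).2 := by
  rw [← stripRep_apply_one_zero]
  simp [stripS, Module.End.mul_apply, stripRep]

@[simp]
theorem stripS_s_mul (x : FreeAlgebra K Psi) : stripS K (ι K s * x) = x := by
  simp [stripS_ι_mul, stripStep]

@[simp]
theorem stripS_a_mul (k : Fin 4) (x : FreeAlgebra K Psi) :
    stripS K (ι K (a k) * x) = ι K (a k) * stripS K x := by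
  simp [stripS_ι_mul, stripStep]

@[simp]
theorem stripS_R_mul (x : FreeAlgebra K Psi) : stripS K (ι K R * x) = ι K R * stripS K x := by
  simp [stripS_ι_mul, stripStep]

@[simp]
theorem stripS_t_mul (x : FreeAlgebra K Psi) : stripS K (ι K t * x) = 0 := by
  simp [stripS_ι_mul, stripStep]

@[simp]
theorem stripS_L_mul (x : FreeAlgebra K Psi) : stripS K (ι K L * x) = 0 := by
  simp [stripS_ι_mul, stripStep]

@[simp]
theorem stripS_Q_mul (i : Fin 7) (x : FreeAlgebra K Psi) : stripS K (ι K (Q i) * x) = 0 := by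
  simp [stripS_ι_mul, stripStep]

@[simp]
theorem stripS_P_mul (j : Fin 4) (x : FreeAlgebra K Psi) : stripS K (ι K (P j) * x) = 0 := by
  simp [stripS_ι_mul, stripStep]

theorem stripS_mul_eq_of_hRel {x y : FreeAlgebra K Psi} (h : HRel K x y) (v : FreeAlgebra K Psi) :
    stripS K (x * v) = stripS K (y * v) := by
  cases h <;> simp [wrd, mul_assoc]

theorem mk_stripS_mul_eq (u : FreeAlgebra K Psi) {x y : FreeAlgebra K Psi} (hx : π x = π y)
    (hs : π (stripS K x) = π (stripS K y)) : π (stripS K (u * x)) = π (stripS K (u * y)) := by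
  induction u using FreeAlgebra.induction generalizing x y with
  | grade0 r => simp [← Algebra.smul_def, hs]
  | grade1 c => cases c <;> simp [hx, hs]
  | mul u₁ u₂ ih₁ ih₂ =>
    rw [mul_assoc, mul_assoc]
    exact ih₁ (by simp only [map_mul, hx]) (ih₂ hx hs)
  | add u₁ u₂ ih₁ ih₂ => simp only [add_mul, map_add, ih₁ hx hs, ih₂ hx hs]

theorem hRel_le_sandwich :
    HRel K ≤ ⇑(RingCon.sandwich ((π).toLinearMap ∘ₗ stripS K).toAddMonoidHom) := by
  intro x y h u v
  simp only [LinearMap.toAddMonoidHom_coe, LinearMap.coe_comp, Function.comp_apply,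
    AlgHom.toLinearMap_apply, mul_assoc]
  exact mk_stripS_mul_eq K u (by simp only [map_mul, RingQuot.mkAlgHom_rel K h])
    (by rw [stripS_mul_eq_of_hRel K h])

theorem mk_stripS_eq_of_mk_eq {x y : FreeAlgebra K Psi} (h : π x = π y) :
    π (stripS K x) = π (stripS K y) :=
  RingCon.sandwich_apply_eq (RingQuot.rel_of_mkAlgHom_eq (hRel_le_sandwich K) h)

end AlgH

/-- Left multiplication by `s` is injective on images of words in the
algebra `H`: if the images of `s·Y` and `s·Z` in `H` are equal then so are the images of `Y`
and `Z`. -/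
theorem s_mul_left_injective (K : Type*) [Field K] (Y Z : List Psi)
    (h : mkw K (Psi.s :: Y) = mkw K (Psi.s :: Z)) : mkw K Y = mkw K Z := by
  simpa only [mkw, AlgH.wrd_cons, AlgH.stripS_s_mul] using AlgH.mk_stripS_eq_of_mk_eq K h
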